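/- arXiv:1404.1507 — 3 statements merged into one kernel-verified Lean document; each statement's English description precedes it below -/
import Mathlib

section
/- Let a ∈ [-1,1] and let p̄ = 1/2·(1 - sin(π·a/4)). Suppose p is a real number with |p - p̄| ≤ ν/4 for some ν with 0 < ν small enough that |1 - 2p| ≤ 3/4. Then |a - (4/π)·arcsin(1 - 2p)| ≤ ν. -/
/-!
Since `|πa/4| ≤ π/4 < π/2`, the true value is recovered exactly as `a = (4/π) arcsin s`
with `s = sin (πa/4) = 1 - 2p̄`, and `|s| ≤ sin (π/4) < 3/4`. The estimate `1 - 2p` lies within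
`ν/2` of `s`, and on `[-3/4, 3/4]` the derivative of `arcsin` is at most `4/√7`, so the error
is at most `(4/π)(4/√7)(ν/2) = 8ν/(π√7) ≤ ν`.
-/

open Real

theorem abs_arcsin_sub_arcsin_le {r x y : ℝ} (hr : r < 1) (hx : |x| ≤ r) (hy : |y| ≤ r) :
    |arcsin y - arcsin x| ≤ |y - x| / √(1 - r ^ 2) := by
  have hr₀ : 0 < √(1 - r ^ 2) := sqrt_pos.2 (by nlinarith [abs_nonneg x])
  have hderiv : ∀ z ∈ Set.Icc (-r) r,
      HasDerivWithinAt arcsin (1 / √(1 - z ^ 2)) (Set.Icc (-r) r) z :=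
    fun z hz => (hasDerivAt_arcsin (by linarith [hz.1]) (by linarith [hz.2])).hasDerivWithinAt
  have hbound : ∀ z ∈ Set.Icc (-r) r, ‖1 / √(1 - z ^ 2)‖ ≤ 1 / √(1 - r ^ 2) := by
    intro z hz
    have hz2 : z ^ 2 ≤ r ^ 2 := sq_le_sq' hz.1 hz.2
    rw [norm_of_nonneg (by positivity)]
    gcongr
  have := (convex_Icc (-r) r).norm_image_sub_le_of_norm_hasDerivWithin_le hderiv hbound
    (abs_le.1 hx) (abs_le.1 hy)
  simpa only [norm_eq_abs, div_eq_inv_mul, mul_one] using this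

theorem abs_sin_le_sin_of_abs_le {x y : ℝ} (hy : y ≤ π / 2) (hxy : |x| ≤ y) :
    |sin x| ≤ sin y := by
  obtain ⟨hlo, hhi⟩ := abs_le.1 hxy
  rw [abs_le, ← sin_neg]
  constructor
  · exact sin_le_sin_of_le_of_le_pi_div_two (by linarith) (by linarith) (by linarith)
  · exact sin_le_sin_of_le_of_le_pi_div_two (by linarith) hy hhi

theorem sin_pi_div_four_le : sin (π / 4) ≤ 3 / 4 := by
  rw [sin_pi_div_four]
  nlinarith [sq_sqrt (show (0 : ℝ) ≤ 2 by norm_num), sqrt_nonneg 2]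

theorem eight_le_pi_mul_sqrt_seven : 8 ≤ π * √7 := by
  have h7 : 13 / 5 ≤ √7 := le_sqrt_of_sq_le (by norm_num)
  nlinarith [pi_gt_d2]

theorem abs_arcsin_sub_arcsin_le_of_abs_le_three_quarters {x y : ℝ} (hx : |x| ≤ 3 / 4)
    (hy : |y| ≤ 3 / 4) : |arcsin y - arcsin x| ≤ |y - x| / (√7 / 4) := by
  have hsqrt : √(1 - (3 / 4 : ℝ) ^ 2) = √7 / 4 := by
    rw [show (1 : ℝ) - (3 / 4) ^ 2 = 7 / 4 ^ 2 by norm_num, sqrt_div' _ (by norm_num),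
      sqrt_sq (by norm_num)]
  simpa only [hsqrt] using abs_arcsin_sub_arcsin_le (by norm_num) hx hy

theorem four_div_pi_mul_arcsin_sin {a : ℝ} (ha : |a| ≤ 2) :
    4 / π * arcsin (sin (π * a / 4)) = a := by
  obtain ⟨hlo, hhi⟩ := abs_le.1 ha
  rw [arcsin_sin (by nlinarith [pi_pos]) (by nlinarith [pi_pos])]
  field_simp

theorem stmt_6_general (a ν p : ℝ) (ha : a ∈ Set.Icc (-1 : ℝ) 1)
    (hp : |p - 1/2 * (1 - Real.sin (Real.pi * a / 4))| ≤ ν / 4)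
    (hsmall : |1 - 2 * p| ≤ 3/4) :
    |a - (4 / Real.pi) * Real.arcsin (1 - 2 * p)| ≤ ν := by
  set s := sin (π * a / 4)
  have ha₁ : |a| ≤ 1 := abs_le.2 ⟨by linarith [ha.1], ha.2⟩
  have hangle : |π * a / 4| ≤ π / 4 := by
    rw [abs_div, abs_mul, abs_of_pos pi_pos, abs_of_pos (by norm_num : (0 : ℝ) < 4)]
    gcongr
    nlinarith [pi_pos]
  have hs : |s| ≤ 3 / 4 :=
    (abs_sin_le_sin_of_abs_le (by linarith [pi_pos]) hangle).trans sin_pi_div_four_le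
  have hdist : |(1 - 2 * p) - s| ≤ ν / 2 := by
    rw [show (1 - 2 * p) - s = -2 * (p - 1/2 * (1 - s)) by ring, abs_mul, abs_neg, abs_two]
    linarith
  have hν : 0 ≤ ν := by linarith [abs_nonneg (p - 1/2 * (1 - s))]
  calc |a - 4 / π * arcsin (1 - 2 * p)| = 4 / π * |arcsin (1 - 2 * p) - arcsin s| := by
        nth_rw 1 [← four_div_pi_mul_arcsin_sin (ha₁.trans one_le_two)]
        rw [← mul_sub, abs_mul, abs_sub_comm, abs_of_pos (by positivity)]
    _ ≤ 4 / π * ((ν / 2) / (√7 / 4)) := by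
        gcongr
        exact (abs_arcsin_sub_arcsin_le_of_abs_le_three_quarters hs hsmall).trans (by gcongr)
    _ = ν * (8 / (π * √7)) := by field_simp; ring
    _ ≤ ν :=
        mul_le_of_le_one_right hν ((div_le_one (by positivity)).2 eight_le_pi_mul_sqrt_seven)

/-- If `p` is within `ν/4` of `p̄ = 1/2 (1 - sin (πa/4))` and `|1-2p| ≤ 3/4`,
then `(4/π) arcsin (1-2p)` estimates `a` within `ν`. -/
theorem stmt_6 (a ν p : ℝ) (ha : a ∈ Set.Icc (-1 : ℝ) 1) (hν : 0 < ν)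
    (hp : |p - 1/2 * (1 - Real.sin (Real.pi * a / 4))| ≤ ν / 4)
    (hsmall : |1 - 2 * p| ≤ 3/4) :
    |a - (4 / Real.pi) * Real.arcsin (1 - 2 * p)| ≤ ν :=
  stmt_6_general a ν p ha hp hsmall
end

section
/- Let |$⟩ = |α₁⟩⊗…⊗|α_n⟩ be a product of single-qubit pure states with Bloch coefficients ⟨A^i_j⟩ (j ∈ {x,y,z}). Suppose estimates ⟨Ã^i_j⟩ satisfy |⟨Ã^i_j⟩ - ⟨A^i_j⟩| ≤ ν for all i, j. Define ρ'_i = I/2 + ∑_j ⟨Ã^i_j⟩σ_j, let ρ_i be a closest density matrix to ρ'_i in trace distance, and ρ = ρ₁⊗…⊗ρ_n. Then ⟨$|ρ|$⟩ ≥ 1 - 6nν. -/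
open scoped ComplexOrder

/-- Trace norm (Schatten 1-norm) of a complex square matrix. -/
noncomputable def traceNorm {ι : Type*} [Fintype ι] [DecidableEq ι]
    (M : Matrix ι ι ℂ) : ℝ :=
  (((Matrix.posSemidef_self_mul_conjTranspose M).1.eigenvectorUnitary.1 *
    Matrix.diagonal (fun i => ((√((Matrix.posSemidef_self_mul_conjTranspose M).1.eigenvalues i) : ℝ) : ℂ)) *
    (star (Matrix.posSemidef_self_mul_conjTranspose M).1.eigenvectorUnitary :
      Matrix ι ι ℂ)).trace).re

/-- Trace distance `D(A,B) = ‖A-B‖₁ / 2`. -/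
noncomputable def traceDist {ι : Type*} [Fintype ι] [DecidableEq ι]
    (A B : Matrix ι ι ℂ) : ℝ :=
  traceNorm (A - B) / 2

/-- A density matrix: positive semidefinite with unit trace. -/
def IsDensityMatrix {ι : Type*} [Fintype ι] (ρ : Matrix ι ι ℂ) : Prop :=
  ρ.PosSemidef ∧ ρ.trace = 1

/-- Fidelity of a state `ρ` with the pure state `ψ`: `⟨ψ|ρ|ψ⟩`. -/
noncomputable def pureFid {ι : Type*} [Fintype ι] (ρ : Matrix ι ι ℂ) (ψ : ι → ℂ) : ℝ :=
  (dotProduct (star ψ) (ρ.mulVec ψ)).re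

/-- The Pauli matrices σ_x, σ_y, σ_z. -/
noncomputable def pauli : Fin 3 → Matrix (Fin 2) (Fin 2) ℂ :=
  ![!![0, 1; 1, 0], !![0, -Complex.I; Complex.I, 0], !![1, 0; 0, -1]]

/-! Write a Hermitian unit-trace qubit matrix as `I/2 + r • σ` with Bloch vector `r ∈ ℝ³`.
Its determinant is `1/4 - ‖r‖²`, so states have `‖r‖ ≤ 1/2` and pure states `‖r‖ = 1/2`, and
the trace distance of two such matrices is `‖r - s‖`, because `(r • σ)² = ‖r‖² I`. With `a` the
Bloch vector of `α`, `a'` the estimate and `r` the projected state, `‖a - a'‖ ≤ 3ν`, minimality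
of `r` gives `‖a - r‖ ≤ 2‖a - a'‖`, and `1 - ⟨α|ρ|α⟩ = 2⟪a, a - r⟫ ≤ ‖a - r‖` by Cauchy–Schwarz.
Hence each qubit has fidelity at least `1 - 6ν`; the fidelity of the product state is the
product of these and is at least `1 - 6nν` by the Weierstrass product inequality. -/

open Matrix Complex
open scoped InnerProductSpace

noncomputable def blochMatrix (r : EuclideanSpace ℝ (Fin 3)) : Matrix (Fin 2) (Fin 2) ℂ :=
  (1 / 2 : ℂ) • 1 + ∑ j, (r j : ℂ) • pauli j

lemma blochMatrix_eq (r : EuclideanSpace ℝ (Fin 3)) :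
    blochMatrix r = !![1 / 2 + (r 2 : ℂ), r 0 - r 1 * I; r 0 + r 1 * I, 1 / 2 - r 2] := by
  ext i j
  fin_cases i <;> fin_cases j <;> simp [blochMatrix, pauli, Fin.sum_univ_three] <;> ring

lemma trace_blochMatrix (r : EuclideanSpace ℝ (Fin 3)) : (blochMatrix r).trace = 1 := by
  rw [blochMatrix_eq, trace_fin_two_of]; ring

lemma det_blochMatrix (r : EuclideanSpace ℝ (Fin 3)) :
    (blochMatrix r).det = ((1 / 4 - ‖r‖ ^ 2 : ℝ) : ℂ) := by
  rw [blochMatrix_eq, det_fin_two_of, EuclideanSpace.norm_sq_eq, Fin.sum_univ_three]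
  simp only [Real.norm_eq_abs, sq_abs]
  push_cast
  ring_nf; rw [I_sq]; ring

lemma trace_blochMatrix_mul_blochMatrix (a r : EuclideanSpace ℝ (Fin 3)) :
    (blochMatrix a * blochMatrix r).trace = 1 / 2 + 2 * ((⟪a, r⟫_ℝ : ℝ) : ℂ) := by
  rw [blochMatrix_eq, blochMatrix_eq, PiLp.inner_apply, Fin.sum_univ_three]
  simp [trace_fin_two]
  ring_nf; rw [I_sq]; ring

lemma traceNorm_eq_sum_sqrt_eigenvalues {ι : Type*} [Fintype ι] [DecidableEq ι]
    (M : Matrix ι ι ℂ) :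
    traceNorm M = ∑ i, √((posSemidef_self_mul_conjTranspose M).1.eigenvalues i) := by
  rw [traceNorm, trace_mul_cycle, Unitary.coe_star_mul_self, one_mul, trace_diagonal]
  simp

lemma traceNorm_eq_of_mul_conjTranspose_eq_smul_one {ι : Type*} [Fintype ι] [DecidableEq ι]
    {M : Matrix ι ι ℂ} {c : ℝ} (h : M * Mᴴ = (c : ℂ) • 1) :
    traceNorm M = Fintype.card ι * √c := by
  set hH := (posSemidef_self_mul_conjTranspose M).1
  have hspec := (congrArg (Unitary.conjStarAlgAut ℂ _ (star hH.eigenvectorUnitary)) h).symm.trans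
    hH.conjStarAlgAut_star_eigenvectorUnitary
  rw [map_smul, map_one] at hspec
  have heig : ∀ i, c = hH.eigenvalues i := fun i => by
    simpa using congrFun (congrFun hspec i) i
  simp [traceNorm_eq_sum_sqrt_eigenvalues, ← heig]

lemma traceDist_blochMatrix (r s : EuclideanSpace ℝ (Fin 3)) :
    traceDist (blochMatrix r) (blochMatrix s) = ‖r - s‖ := by
  have hsq : (blochMatrix r - blochMatrix s) * (blochMatrix r - blochMatrix s)ᴴ =
      ((‖r - s‖ ^ 2 : ℝ) : ℂ) • 1 := by
    rw [EuclideanSpace.norm_sq_eq, Fin.sum_univ_three, blochMatrix_eq, blochMatrix_eq]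
    ext i j
    fin_cases i <;> fin_cases j <;>
      simp [mul_apply, Real.norm_eq_abs] <;> ring_nf <;> simp [I_sq] <;> ring
  rw [traceDist, traceNorm_eq_of_mul_conjTranspose_eq_smul_one hsq, Real.sqrt_sq (norm_nonneg _)]
  simp

lemma exists_blochMatrix_eq {ρ : Matrix (Fin 2) (Fin 2) ℂ} (hH : ρ.IsHermitian)
    (htr : ρ.trace = 1) : ∃ r, ρ = blochMatrix r := by
  refine ⟨!₂[(ρ 0 1).re, -(ρ 0 1).im, (ρ 0 0).re - 1 / 2], ?_⟩
  have h00 : (ρ 0 0).im = 0 := by simpa using (congrArg Complex.im (hH.coe_re_apply_self 0)).symm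
  have h11 : ρ 1 1 = 1 - ρ 0 0 := by rw [← htr, trace_fin_two]; ring
  have h10 : ρ 1 0 = star (ρ 0 1) := by rw [← hH.apply 0 1, star_star]
  rw [blochMatrix_eq]
  ext i j
  fin_cases i <;> fin_cases j <;> simp [h11, h10, h00, Complex.ext_iff]
  ring

lemma IsDensityMatrix.exists_blochMatrix_eq {ρ : Matrix (Fin 2) (Fin 2) ℂ}
    (hρ : IsDensityMatrix ρ) : ∃ r, ‖r‖ ≤ 1 / 2 ∧ ρ = blochMatrix r := by
  obtain ⟨r, rfl⟩ := _root_.exists_blochMatrix_eq hρ.1.1 hρ.2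
  have hdet := hρ.1.det_nonneg
  rw [det_blochMatrix, Complex.zero_le_real] at hdet
  refine ⟨r, ?_, rfl⟩
  exact (pow_le_pow_iff_left₀ (norm_nonneg r) (by norm_num) two_ne_zero).mp (by linarith)

lemma norm_eq_half_of_vecMulVec_eq_blochMatrix {α : Fin 2 → ℂ} {a : EuclideanSpace ℝ (Fin 3)}
    (h : vecMulVec α (star α) = blochMatrix a) : ‖a‖ = 1 / 2 := by
  have hdet := det_vecMulVec α (star α)
  rw [h, det_blochMatrix, Complex.ofReal_eq_zero] at hdet
  exact (pow_left_inj₀ (norm_nonneg a) (by norm_num) two_ne_zero).mp (by linarith)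

lemma pureFid_eq_re_trace {ι : Type*} [Fintype ι] (ρ : Matrix ι ι ℂ) (ψ : ι → ℂ) :
    pureFid ρ ψ = (vecMulVec ψ (star ψ) * ρ).trace.re := by
  rw [pureFid, vecMulVec_mul, trace_vecMulVec, dotProduct_comm ψ, ← dotProduct_mulVec]

lemma pureFid_blochMatrix {α : Fin 2 → ℂ} {a : EuclideanSpace ℝ (Fin 3)}
    (h : vecMulVec α (star α) = blochMatrix a) (r : EuclideanSpace ℝ (Fin 3)) :
    pureFid (blochMatrix r) α = 1 / 2 + 2 * ⟪a, r⟫_ℝ := by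
  rw [pureFid_eq_re_trace, h, trace_blochMatrix_mul_blochMatrix]
  simp

lemma one_sub_pureFid_le_traceDist {α : Fin 2 → ℂ} {a : EuclideanSpace ℝ (Fin 3)}
    (h : vecMulVec α (star α) = blochMatrix a) (r : EuclideanSpace ℝ (Fin 3)) :
    1 - pureFid (blochMatrix r) α ≤ traceDist (blochMatrix a) (blochMatrix r) := by
  have ha := norm_eq_half_of_vecMulVec_eq_blochMatrix h
  rw [pureFid_blochMatrix h, traceDist_blochMatrix]
  calc 1 - (1 / 2 + 2 * ⟪a, r⟫_ℝ) = 2 * ⟪a, a - r⟫_ℝ := by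
        rw [inner_sub_right, real_inner_self_eq_norm_sq, ha]; ring
    _ ≤ 2 * (‖a‖ * ‖a - r‖) := by gcongr; exact real_inner_le_norm a (a - r)
    _ = ‖a - r‖ := by rw [ha]; ring

lemma traceDist_le_two_mul_of_closest {a r a' : EuclideanSpace ℝ (Fin 3)}
    (hclosest : traceDist (blochMatrix r) (blochMatrix a') ≤
      traceDist (blochMatrix a) (blochMatrix a')) :
    traceDist (blochMatrix a) (blochMatrix r) ≤ 2 * traceDist (blochMatrix a) (blochMatrix a') := by
  simp only [traceDist_blochMatrix] at *
  linarith [norm_sub_le_norm_sub_add_norm_sub a a' r, norm_sub_rev a' r]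

lemma EuclideanSpace.norm_le_sum_norm {𝕜 ι : Type*} [RCLike 𝕜] [Fintype ι]
    (x : EuclideanSpace 𝕜 ι) : ‖x‖ ≤ ∑ i, ‖x i‖ := by
  classical
  conv_lhs => rw [← (EuclideanSpace.basisFun ι 𝕜).sum_repr x]
  refine (norm_sum_le _ _).trans (le_of_eq ?_)
  simp [norm_smul]

lemma traceDist_blochMatrix_le {a a' : EuclideanSpace ℝ (Fin 3)} {ν : ℝ}
    (h : ∀ j, |a' j - a j| ≤ ν) : traceDist (blochMatrix a) (blochMatrix a') ≤ 3 * ν := by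
  rw [traceDist_blochMatrix]
  refine (EuclideanSpace.norm_le_sum_norm _).trans ?_
  simp only [PiLp.sub_apply, Real.norm_eq_abs, Fin.sum_univ_three]
  linarith [h 0, h 1, h 2, abs_sub_comm (a 0) (a' 0), abs_sub_comm (a 1) (a' 1),
    abs_sub_comm (a 2) (a' 2)]

lemma IsDensityMatrix.pureFid_mem_Icc {α : Fin 2 → ℂ} {a : EuclideanSpace ℝ (Fin 3)}
    {ρ : Matrix (Fin 2) (Fin 2) ℂ} (hα : vecMulVec α (star α) = blochMatrix a)
    (hρ : IsDensityMatrix ρ) : pureFid ρ α ∈ Set.Icc 0 1 := by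
  obtain ⟨r, hr, rfl⟩ := hρ.exists_blochMatrix_eq
  have hinner : |⟪a, r⟫_ℝ| ≤ 1 / 4 := calc
    |⟪a, r⟫_ℝ| ≤ ‖a‖ * ‖r‖ := abs_real_inner_le_norm a r
    _ ≤ 1 / 2 * (1 / 2) := by rw [norm_eq_half_of_vecMulVec_eq_blochMatrix hα]; gcongr
    _ = 1 / 4 := by norm_num
  rw [pureFid_blochMatrix hα, abs_le] at *
  constructor <;> linarith [hinner.1, hinner.2]

lemma one_sub_six_mul_le_pureFid {α : Fin 2 → ℂ} {a a' : EuclideanSpace ℝ (Fin 3)} {ν : ℝ}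
    {ρ : Matrix (Fin 2) (Fin 2) ℂ} (hα : vecMulVec α (star α) = blochMatrix a)
    (hest : ∀ j, |a' j - a j| ≤ ν) (hρ : IsDensityMatrix ρ)
    (hmin : ∀ τ, IsDensityMatrix τ → traceDist ρ (blochMatrix a') ≤ traceDist τ (blochMatrix a')) :
    1 - 6 * ν ≤ pureFid ρ α := by
  obtain ⟨r, -, rfl⟩ := hρ.exists_blochMatrix_eq
  have hpure : IsDensityMatrix (blochMatrix a) :=
    ⟨hα ▸ posSemidef_vecMulVec_self_star α, trace_blochMatrix a⟩
  linarith [one_sub_pureFid_le_traceDist hα r,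
    traceDist_le_two_mul_of_closest (hmin _ hpure), traceDist_blochMatrix_le hest]

lemma star_dotProduct_mulVec_piProd {ι κ R : Type*} [Fintype ι] [DecidableEq ι] [Fintype κ]
    [CommSemiring R] [StarRing R] (ρ : ι → Matrix κ κ R) (α : ι → κ → R) :
    star (fun f : ι → κ => ∏ i, α i (f i)) ⬝ᵥ
        (of fun f g : ι → κ => ∏ i, ρ i (f i) (g i)) *ᵥ (fun f => ∏ i, α i (f i)) =
      ∏ i, star (α i) ⬝ᵥ ρ i *ᵥ α i := by
  simp only [dotProduct, mulVec, of_apply, Pi.star_apply, star_prod, Finset.mul_sum,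
    Finset.prod_univ_sum, Fintype.piFinset_univ, Finset.prod_mul_distrib]

lemma pureFid_piProd {ι κ : Type*} [Fintype ι] [DecidableEq ι] [Fintype κ]
    {ρ : ι → Matrix κ κ ℂ} (hρ : ∀ i, (ρ i).IsHermitian) (α : ι → κ → ℂ) :
    pureFid (of fun f g : ι → κ => ∏ i, ρ i (f i) (g i)) (fun f => ∏ i, α i (f i)) =
      ∏ i, pureFid (ρ i) (α i) := by
  have hreal : ∀ i, star (α i) ⬝ᵥ ρ i *ᵥ α i = (pureFid (ρ i) (α i) : ℂ) := fun i =>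
    Complex.ext rfl (by simpa using (hρ i).im_star_dotProduct_mulVec_self (α i))
  rw [pureFid, star_dotProduct_mulVec_piProd, Finset.prod_congr rfl fun i _ => hreal i,
    ← Complex.ofReal_prod, Complex.ofReal_re]

lemma Finset.one_sub_sum_le_prod {ι : Type*} (s : Finset ι) {x : ι → ℝ}
    (h0 : ∀ i ∈ s, 0 ≤ x i) (h1 : ∀ i ∈ s, x i ≤ 1) :
    1 - ∑ i ∈ s, (1 - x i) ≤ ∏ i ∈ s, x i := by
  induction s using Finset.cons_induction with
  | empty => simp
  | cons a s _ ih =>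
    rw [sum_cons, prod_cons]
    have ih := ih (fun i hi => h0 i (mem_cons_of_mem hi)) (fun i hi => h1 i (mem_cons_of_mem hi))
    have hsum : 0 ≤ ∑ i ∈ s, (1 - x i) :=
      sum_nonneg fun i hi => sub_nonneg.mpr (h1 i (mem_cons_of_mem hi))
    have hx0 := h0 a (mem_cons_self a s)
    have hx1 := h1 a (mem_cons_self a s)
    nlinarith [mul_le_mul_of_nonneg_left ih hx0, mul_le_of_le_one_left hsum hx1]

theorem stmt_14_general (n : ℕ) (ν : ℝ)
    (α : Fin n → Fin 2 → ℂ)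
    (A At : Fin n → Fin 3 → ℝ)
    (hBloch : ∀ i, Matrix.vecMulVec (α i) (star (α i)) =
      (1/2 : ℂ) • (1 : Matrix (Fin 2) (Fin 2) ℂ) + ∑ j, (A i j : ℂ) • pauli j)
    (hest : ∀ i j, |At i j - A i j| ≤ ν)
    (ρ' ρ : Fin n → Matrix (Fin 2) (Fin 2) ℂ)
    (hρ' : ∀ i, ρ' i =
      (1/2 : ℂ) • (1 : Matrix (Fin 2) (Fin 2) ℂ) + ∑ j, (At i j : ℂ) • pauli j)
    (hρ : ∀ i, IsDensityMatrix (ρ i))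
    (hmin : ∀ i, ∀ τ, IsDensityMatrix τ → traceDist (ρ i) (ρ' i) ≤ traceDist τ (ρ' i)) :
    1 - 6 * n * ν ≤
      pureFid (Matrix.of fun f g : Fin n → Fin 2 => ∏ i, ρ i (f i) (g i))
        (fun f : Fin n → Fin 2 => ∏ i, α i (f i)) := by
  obtain rfl := funext hρ'
  -- `blochMatrix (WithLp.toLp 2 v)` unfolds to the matrices in `hBloch` and `hρ'`.
  have hF : ∀ i, pureFid (ρ i) (α i) ∈ Set.Icc 0 1 := fun i =>
    (hρ i).pureFid_mem_Icc (a := WithLp.toLp 2 (A i)) (hBloch i)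
  have hlow : ∀ i, 1 - 6 * ν ≤ pureFid (ρ i) (α i) := fun i =>
    one_sub_six_mul_le_pureFid (a := WithLp.toLp 2 (A i)) (a' := WithLp.toLp 2 (At i))
      (hBloch i) (hest i) (hρ i) (hmin i)
  rw [pureFid_piProd fun i => (hρ i).1.1]
  have hdefect : ∑ i, (1 - pureFid (ρ i) (α i)) ≤ n * (6 * ν) := by
    simpa using Finset.univ.sum_le_card_nsmul _ _ fun i _ => sub_le_comm.mp (hlow i)
  linarith [Finset.univ.one_sub_sum_le_prod (fun i _ => (hF i).1) (fun i _ => (hF i).2)]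

/-- Main tomography fidelity bound: reconstructing each qubit from Pauli
expectation estimates accurate to `ν` and projecting to the closest density
matrix yields a product state `ρ` with `⟨$|ρ|$⟩ ≥ 1 - 6nν`. -/
theorem stmt_14 (n : ℕ) (ν : ℝ) (hν : 0 ≤ ν)
    (α : Fin n → Fin 2 → ℂ)
    (hα : ∀ i, dotProduct (star (α i)) (α i) = 1)
    (A At : Fin n → Fin 3 → ℝ)
    (hBloch : ∀ i, Matrix.vecMulVec (α i) (star (α i)) =
      (1/2 : ℂ) • (1 : Matrix (Fin 2) (Fin 2) ℂ) + ∑ j, (A i j : ℂ) • pauli j)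
    (hest : ∀ i j, |At i j - A i j| ≤ ν)
    (ρ' ρ : Fin n → Matrix (Fin 2) (Fin 2) ℂ)
    (hρ' : ∀ i, ρ' i =
      (1/2 : ℂ) • (1 : Matrix (Fin 2) (Fin 2) ℂ) + ∑ j, (At i j : ℂ) • pauli j)
    (hρ : ∀ i, IsDensityMatrix (ρ i))
    (hmin : ∀ i, ∀ τ, IsDensityMatrix τ → traceDist (ρ i) (ρ' i) ≤ traceDist τ (ρ' i)) :
    1 - 6 * n * ν ≤
      pureFid (Matrix.of fun f g : Fin n → Fin 2 => ∏ i, ρ i (f i) (g i))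
        (fun f : Fin n → Fin 2 => ∏ i, α i (f i)) :=
  stmt_14_general n ν α A At hBloch hest ρ' ρ hρ' hρ hmin
end

section
/- If p is a real number with |1 - 2p| ≤ 1 and p within distance ν/4 + C/N of 1/2·(1 - sin(π a/4)) for a ∈ [-1,1], and if ν and 1/N are small enough that |1 - 2p| ≤ 3/4, then |a - (4/π)·arcsin(1 - 2p)| ≤ ν + C'/N for some constant C' depending only on C. -/
/-! Since `|πa/4| ≤ π/4`, the point `sin (πa/4)` lies in `[-3/4, 3/4]`, where `arcsin` is
`π/2`-Lipschitz (its derivative `1/√(1 - z²)` is at most `4/√7 < π/2` there). Applying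
`(4/π) arcsin` to `sin (πa/4)` recovers `a`, and to `1 - 2p`, which is within `ν/2 + 2C/N` of it,
gives an estimate within `(4/π)(π/2)(ν/2 + 2C/N) = ν + 4C/N`. -/

open Real Set

namespace Real

lemma abs_sin_le_sin_of_abs_le {x y : ℝ} (hxy : |x| ≤ y) (hy : y ≤ π / 2) : |sin x| ≤ sin y := by
  obtain ⟨hlo, hhi⟩ := abs_le.mp hxy
  rw [abs_le, ← sin_neg]
  constructor
  · exact sin_le_sin_of_le_of_le_pi_div_two (by linarith) (hhi.trans hy) hlo
  · exact sin_le_sin_of_le_of_le_pi_div_two (by linarith) hy hhi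

lemma abs_arcsin_sub_le {r x y : ℝ} (hr : r < 1) (hx : |x| ≤ r) (hy : |y| ≤ r) :
    |arcsin x - arcsin y| ≤ |x - y| / √(1 - r ^ 2) := by
  have hr0 : 0 ≤ r := (abs_nonneg x).trans hx
  have hsqrt : 0 < √(1 - r ^ 2) := sqrt_pos.mpr (by nlinarith)
  have hderiv : ∀ z ∈ Icc (-r) r, HasDerivWithinAt arcsin (1 / √(1 - z ^ 2)) (Icc (-r) r) z :=
    fun z hz => (hasDerivAt_arcsin (by linarith [hz.1]) (by linarith [hz.2])).hasDerivWithinAt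
  have hbound : ∀ z ∈ Icc (-r) r, ‖1 / √(1 - z ^ 2)‖ ≤ 1 / √(1 - r ^ 2) := by
    intro z hz
    have hz2 : z ^ 2 ≤ r ^ 2 := sq_le_sq' hz.1 hz.2
    rw [norm_of_nonneg (by positivity)]
    gcongr
  have := (convex_Icc (-r) r).norm_image_sub_le_of_norm_hasDerivWithin_le hderiv hbound
    (abs_le.mp hy) (abs_le.mp hx)
  simpa only [norm_eq_abs, one_div_mul_eq_div] using this

lemma abs_arcsin_sub_le_pi_div_two_mul {x y : ℝ} (hx : |x| ≤ 3 / 4) (hy : |y| ≤ 3 / 4) :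
    |arcsin x - arcsin y| ≤ π / 2 * |x - y| := by
  have hconst : 1 / √(1 - (3 / 4 : ℝ) ^ 2) ≤ π / 2 := by
    have hsqrt : (2 / π) ^ 2 ≤ 1 - (3 / 4 : ℝ) ^ 2 := by
      rw [div_pow, div_le_iff₀ (by positivity)]
      nlinarith [pi_gt_d2]
    have := sqrt_le_sqrt hsqrt
    rw [sqrt_sq (by positivity)] at this
    rw [div_le_iff₀ ((by positivity : (0 : ℝ) < 2 / π).trans_le this)]
    calc (1 : ℝ) = π / 2 * (2 / π) := by field_simp
      _ ≤ π / 2 * √(1 - (3 / 4) ^ 2) := by gcongr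
  calc |arcsin x - arcsin y| ≤ |x - y| / √(1 - (3 / 4 : ℝ) ^ 2) :=
        abs_arcsin_sub_le (by norm_num) hx hy
    _ = 1 / √(1 - (3 / 4 : ℝ) ^ 2) * |x - y| := by ring
    _ ≤ π / 2 * |x - y| := by gcongr

lemma abs_sin_pi_mul_div_four_le {a : ℝ} (ha : a ∈ Icc (-1 : ℝ) 1) :
    |sin (π * a / 4)| ≤ 3 / 4 := by
  have hpi := pi_pos
  have hangle : |π * a / 4| ≤ π / 4 := by
    rw [abs_div, abs_mul, abs_of_pos hpi, abs_of_pos (by norm_num : (0 : ℝ) < 4)]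
    gcongr
    exact mul_le_of_le_one_right hpi.le (abs_le.mpr ha)
  calc |sin (π * a / 4)| ≤ sin (π / 4) := abs_sin_le_sin_of_abs_le hangle (by linarith)
    _ = √2 / 2 := sin_pi_div_four
    _ ≤ 3 / 4 := by nlinarith [sq_sqrt (zero_le_two : (0 : ℝ) ≤ 2), sqrt_nonneg 2]

lemma four_div_pi_mul_arcsin_sin_pi_mul_div_four {a : ℝ} (ha : a ∈ Icc (-2 : ℝ) 2) :
    4 / π * arcsin (sin (π * a / 4)) = a := by
  have hpi := pi_pos
  rw [arcsin_sin (by nlinarith [ha.1]) (by nlinarith [ha.2])]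
  field_simp

end Real

/-- Quantitative single-operator estimation bound: if `p` is within
`ν/4 + C/N` of `1/2 (1 - sin (πa/4))` and `|1-2p| ≤ 3/4`, then
`(4/π) arcsin (1-2p)` estimates `a` within `ν + C'/N`, for some constant `C'`
depending only on `C`. -/
theorem stmt_18 (C : ℝ) (hC : 0 < C) :
    ∃ C' : ℝ, 0 < C' ∧
      ∀ (N : ℕ) (a p ν : ℝ), 0 < N → 0 ≤ ν → a ∈ Set.Icc (-1 : ℝ) 1 →
        |1 - 2 * p| ≤ 1 →
        |p - 1/2 * (1 - Real.sin (Real.pi * a / 4))| ≤ ν / 4 + C / N →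
        |1 - 2 * p| ≤ 3/4 →
        |a - (4 / Real.pi) * Real.arcsin (1 - 2 * p)| ≤ ν + C' / N := by
  refine ⟨4 * C, by positivity, fun N a p ν _ _ ha _ hp h34 => ?_⟩
  have hlip := abs_arcsin_sub_le_pi_div_two_mul (abs_sin_pi_mul_div_four_le ha) h34
  have hid := four_div_pi_mul_arcsin_sin_pi_mul_div_four (a := a)
    ⟨by linarith [ha.1], by linarith [ha.2]⟩
  set s := sin (π * a / 4)
  calc |a - 4 / π * arcsin (1 - 2 * p)|
      = 4 / π * |arcsin s - arcsin (1 - 2 * p)| := by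
        rw [← hid, ← mul_sub, abs_mul, abs_of_pos (by positivity : 0 < 4 / π)]
    _ ≤ 4 / π * (π / 2 * |s - (1 - 2 * p)|) := by gcongr
    _ = 4 * |p - 1 / 2 * (1 - s)| := by
        rw [show s - (1 - 2 * p) = 2 * (p - 1 / 2 * (1 - s)) by ring, abs_mul, abs_two]
        field_simp
    _ ≤ 4 * (ν / 4 + C / N) := by gcongr
    _ = ν + 4 * C / N := by ring
end
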